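/- arXiv:2506.19493 — 2 statements merged into one kernel-verified Lean document; each statement's English description precedes it below -/
import Mathlib

section
/- A graph is k-representable if and only if it is represented by some word w with |w|_a ≤ k for every letter a in alph(w). -/
/-!
If two letters alternate in `w`, their counts differ by at most one, and the letter that comes
first in their projection occurs at least as often as the other. Hence, if every letter occurs at
most `k` times, let `x` be the letter occurring fewer than `k` times whose first occurrence is
latest. Any `y` for which `x` comes first in the projection onto `{x, y}` has its first occurrence
after that of `x`, so it occurs `k` times, more than `x`: thus `x` never comes first among a pair
it alternates with, and prepending `x` to `w` changes no alternation. Repeating this until every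
letter occurs exactly `k` times yields a `k`-uniform word representing the same graph.
-/

open List

variable {α : Type*} [DecidableEq α]

/-- Two distinct letters `a` and `b` alternate in the word `w`:
their projection is an alternating sequence of `a`s and `b`s, both occurring. -/
def Alt (w : List α) (a b : α) : Prop :=
  a ≠ b ∧ a ∈ w ∧ b ∈ w ∧
    (w.filter (fun x => decide (x = a ∨ x = b))).Chain' (· ≠ ·)

/-- The word `w` represents the graph `G` with vertex set `V`:
the alphabet of `w` is `V` and adjacency coincides with alternation. -/
def Represents (w : List α) (V : Finset α) (G : SimpleGraph α) : Prop :=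
  w.toFinset = V ∧ ∀ a b : α, G.Adj a b ↔ Alt w a b

/-- A word is `k`-uniform if every letter of its alphabet occurs exactly `k` times. -/
def KUniform (k : ℕ) (w : List α) : Prop :=
  ∀ a ∈ w, w.count a = k

/-- Number of maximal blocks of `true`s in a boolean word. -/
def blockCount (l : List Bool) : ℕ :=
  ((l.zip (false :: l)).filter (fun p => p.1 && !p.2)).length

/-- `w` is `k`-local witnessed by the marking sequence `σ`. -/
def KLocalWith (k : ℕ) (w σ : List α) : Prop :=
  σ.Nodup ∧ σ.toFinset = w.toFinset ∧
    ∀ i : ℕ, blockCount (w.map (fun x => decide (x ∈ σ.take i))) ≤ k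

/-- `w` is `k`-local: some marking sequence witnesses `k`-locality. -/
def KLocal (k : ℕ) (w : List α) : Prop := ∃ σ : List α, KLocalWith k w σ

/-- The subgraph of `G` induced by `U` (as a graph on the same ambient type). -/
def inducedOn (G : SimpleGraph α) (U : Finset α) : SimpleGraph α where
  Adj a b := G.Adj a b ∧ a ∈ U ∧ b ∈ U
  symm := by
    constructor
    intro a b h
    exact ⟨h.1.symm, h.2.2, h.2.1⟩
  loopless := by
    constructor
    intro a h
    exact G.irrefl h.1

/-- Add a vertex `v` dominating the vertex set `V` to the graph `G`. -/
def addDom (G : SimpleGraph α) (V : Finset α) (v : α) : SimpleGraph α where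
  Adj a b := G.Adj a b ∨ (a = v ∧ b ∈ V ∧ b ≠ v) ∨ (b = v ∧ a ∈ V ∧ a ≠ v)
  symm := by
    constructor
    intro a b h
    rcases h with h | h | h
    · exact Or.inl h.symm
    · exact Or.inr (Or.inr h)
    · exact Or.inr (Or.inl h)
  loopless := by
    constructor
    intro a h
    rcases h with h | h | h
    · exact G.irrefl h
    · exact h.2.2 h.1
    · exact h.2.2 h.1

/-- Threshold graphs (with explicit vertex set): built from the empty graph
by repeatedly adding isolated or dominating vertices. -/
inductive IsThreshold : SimpleGraph α → Finset α → Prop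
  | empty : IsThreshold ⊥ ∅
  | isolated {G V v} (hv : v ∉ V) (h : IsThreshold G V) : IsThreshold G (insert v V)
  | dominating {G V v} (hv : v ∉ V) (h : IsThreshold G V) :
      IsThreshold (addDom G V v) (insert v V)

/-- Clique-width expressions over label type `L` and vertex type `α`. -/
inductive CWExpr (L α : Type*) where
  | vertex : L → α → CWExpr L α
  | union : CWExpr L α → CWExpr L α → CWExpr L α
  | connect : L → L → CWExpr L α → CWExpr L α
  | relabel : L → L → CWExpr L α → CWExpr L α

/-- The graph of all edges between label `i` and label `j` within `V` under labelling `f`. -/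
def connGraph {L : Type*} [DecidableEq L] (V : Finset α) (f : α → L) (i j : L) :
    SimpleGraph α where
  Adj a b := a ≠ b ∧ a ∈ V ∧ b ∈ V ∧ ((f a = i ∧ f b = j) ∨ (f a = j ∧ f b = i))
  symm := by
    constructor
    intro a b h
    rcases h.2.2.2 with h4 | h4
    · exact ⟨h.1.symm, h.2.2.1, h.2.1, Or.inr ⟨h4.2, h4.1⟩⟩
    · exact ⟨h.1.symm, h.2.2.1, h.2.1, Or.inl ⟨h4.2, h4.1⟩⟩
  loopless := by
    constructor
    intro a h
    exact h.1 rfl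

/-- `Builds e V f G`: the clique-width expression `e` builds the labelled graph
with vertex set `V`, labelling `f` and edge structure `G`. -/
inductive Builds {L : Type*} [DecidableEq L] : CWExpr L α → Finset α → (α → L) → SimpleGraph α → Prop
  | vertex (l : L) (v : α) : Builds (.vertex l v) {v} (fun _ => l) ⊥
  | union {e₁ e₂ V₁ V₂ f₁ f₂ G₁ G₂} (h₁ : Builds e₁ V₁ f₁ G₁) (h₂ : Builds e₂ V₂ f₂ G₂)
      (hd : _root_.Disjoint V₁ V₂) :
      Builds (.union e₁ e₂) (V₁ ∪ V₂) (fun x => if x ∈ V₁ then f₁ x else f₂ x) (G₁ ⊔ G₂)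
  | connect {e V f G} (i j : L) (hij : i ≠ j) (h : Builds e V f G) :
      Builds (.connect i j e) V f (G ⊔ connGraph V f i j)
  | relabel {e V f G} (i j : L) (h : Builds e V f G) :
      Builds (.relabel i j e) V (fun x => if f x = i then j else f x) G

/-- The clique-width of `G` (with vertex set `V`) is at most `k`. -/
def CliqueWidthLE (k : ℕ) (G : SimpleGraph α) (V : Finset α) : Prop :=
  ∃ (e : CWExpr (Fin k) α) (f : α → Fin k), Builds e V f G

/-- The crown graph `H_{n,n}`: complete bipartite minus a perfect matching. -/
def crown (n : ℕ) : SimpleGraph (Fin n ⊕ Fin n) where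
  Adj a b :=
    match a, b with
    | .inl x, .inr y => x ≠ y
    | .inr x, .inl y => x ≠ y
    | _, _ => False
  symm := by
    constructor
    intro a b h
    cases a <;> cases b <;> simp_all
    · exact fun hc => h hc.symm
    · exact fun hc => h hc.symm
  loopless := by
    constructor
    intro a h
    cases a <;> simp_all

/-- The disjoint-union-of-cliques graph associated with a partition `P` of `[n]`. -/
def partGraph {n : ℕ} (P : Finpartition (Finset.univ : Finset (Fin n))) :
    SimpleGraph (Fin n) where
  Adj x y := x ≠ y ∧ ∃ C ∈ P.parts, x ∈ C ∧ y ∈ C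
  symm := by
    constructor
    intro a b h
    obtain ⟨hne, C, hC, h1, h2⟩ := h
    exact ⟨hne.symm, C, hC, h2, h1⟩
  loopless := by
    constructor
    intro a h
    exact h.1 rfl

/-- The word associated with a partition: each block written twice in a row. -/
noncomputable def partWord {n : ℕ} (P : Finpartition (Finset.univ : Finset (Fin n))) : List (Fin n) :=
  (P.parts.toList.map (fun C => C.toList ++ C.toList)).flatten

theorem alt_iff {w : List α} {a b : α} :
    Alt w a b ↔ a ≠ b ∧ a ∈ w ∧ b ∈ w ∧
      (w.filter (fun x => decide (x = a ∨ x = b))).IsChain (· ≠ ·) :=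
  Iff.rfl

theorem Alt.symm {w : List α} {a b : α} (h : Alt w a b) : Alt w b a := by
  obtain ⟨hab, ha, hb, hchain⟩ := h
  refine ⟨hab.symm, hb, ha, ?_⟩
  simpa only [or_comm] using hchain

theorem count_le_count_of_isChain_cons {a b : α} (hab : a ≠ b) {t : List α}
    (ht : ∀ x ∈ t, x = a ∨ x = b) (hchain : (a :: t).IsChain (· ≠ ·)) :
    (a :: t).count b ≤ (a :: t).count a ∧ (a :: t).count a ≤ (a :: t).count b + 1 := by
  induction t generalizing a b with
  | nil => simp [hab]
  | cons c s ih =>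
    rw [isChain_cons_cons] at hchain
    obtain rfl : c = b := (ht c mem_cons_self).resolve_left (Ne.symm hchain.1)
    have hs : ∀ x ∈ s, x = c ∨ x = a := fun x hx => (ht x (mem_cons_of_mem _ hx)).symm
    have := ih hab.symm hs hchain.2
    simp only [count_cons_self, count_cons_of_ne hab, count_cons_of_ne hab.symm] at this ⊢
    omega

theorem Alt.count_le_of_head {w : List α} {a b : α} (h : Alt w a b)
    (hhead : (w.filter (fun x => decide (x = a ∨ x = b))).head? = some a) :
    w.count b ≤ w.count a := by
  obtain ⟨hab, -, -, hchain⟩ := h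
  obtain ⟨t, ht⟩ := head?_eq_some_iff.mp hhead
  have hmem : ∀ x ∈ t, x = a ∨ x = b := fun x hx => by
    have : x ∈ w.filter (fun x => decide (x = a ∨ x = b)) := ht ▸ mem_cons_of_mem a hx
    simpa using (mem_filter.mp this).2
  rw [← count_filter (p := fun x => decide (x = a ∨ x = b)) (by simp),
    ← count_filter (p := fun x => decide (x = a ∨ x = b)) (a := a) (by simp), ht]
  exact (count_le_count_of_isChain_cons hab hmem (ht ▸ hchain)).1

theorem idxOf_lt_idxOf_of_head_filter {w : List α} {a b : α} (hab : a ≠ b) (hb : b ∈ w)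
    (hhead : (w.filter (fun x => decide (x = a ∨ x = b))).head? = some a) :
    w.idxOf a < w.idxOf b := by
  induction w with
  | nil => simp at hb
  | cons c t ih =>
    by_cases hca : c = a
    · subst hca
      simp [idxOf_cons_ne _ hab]
    · by_cases hcb : c = b
      · subst hcb
        simp at hhead
        exact absurd hhead hca
      · have hb' : b ∈ t := (mem_cons.mp hb).resolve_left (Ne.symm hcb)
        rw [filter_cons_of_neg (by simp [hca, hcb])] at hhead
        rw [idxOf_cons_ne _ hca, idxOf_cons_ne _ hcb]
        exact Nat.succ_lt_succ (ih hb' hhead)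

theorem alt_cons_iff_of_ne {w : List α} {x a b : α} (hax : a ≠ x) (hbx : b ≠ x) :
    Alt (x :: w) a b ↔ Alt w a b := by
  have hproj : (x :: w).filter (fun z => decide (z = a ∨ z = b)) =
      w.filter (fun z => decide (z = a ∨ z = b)) :=
    filter_cons_of_neg (by simpa using ⟨Ne.symm hax, Ne.symm hbx⟩)
  simp only [alt_iff, hproj, mem_cons, hax, hbx, false_or]

theorem alt_cons_self_iff {w : List α} {x b : α} (hx : x ∈ w) :
    Alt (x :: w) x b ↔
      Alt w x b ∧ (w.filter (fun z => decide (z = x ∨ z = b))).head? ≠ some x := by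
  have hproj : (x :: w).filter (fun z => decide (z = x ∨ z = b)) =
      x :: w.filter (fun z => decide (z = x ∨ z = b)) :=
    filter_cons_of_pos (by simp)
  simp only [alt_iff, hproj, isChain_cons]
  constructor
  · rintro ⟨hxb, -, hb, hhead, hchain⟩
    refine ⟨⟨hxb, hx, (mem_cons.mp hb).resolve_left (Ne.symm hxb), hchain⟩, fun h => ?_⟩
    exact hhead x (Option.mem_def.mpr h) rfl
  · rintro ⟨⟨hxb, -, hb, hchain⟩, hhead⟩
    refine ⟨hxb, mem_cons_self, mem_cons_of_mem x hb, fun y hy => ?_, hchain⟩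
    rintro rfl
    exact hhead (Option.mem_def.mp hy)

theorem alt_cons_iff {w : List α} {x : α} (hx : x ∈ w)
    (hfirst : ∀ y, Alt w x y → (w.filter (fun z => decide (z = x ∨ z = y))).head? ≠ some x)
    (a b : α) : Alt (x :: w) a b ↔ Alt w a b := by
  have hself : ∀ y, Alt (x :: w) x y ↔ Alt w x y := fun y =>
    (alt_cons_self_iff hx).trans ⟨And.left, fun h => ⟨h, hfirst y h⟩⟩
  by_cases hax : a = x
  · subst hax
    exact hself b
  by_cases hbx : b = x
  · subst hbx
    exact ⟨fun h => ((hself a).1 h.symm).symm, fun h => ((hself a).2 h.symm).symm⟩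
  exact alt_cons_iff_of_ne hax hbx

theorem exists_alt_cons_iff_of_count_lt {k : ℕ} {w : List α} (hw : ∀ a ∈ w, w.count a ≤ k)
    (hdef : ∃ x ∈ w, w.count x < k) :
    ∃ x ∈ w, w.count x < k ∧ ∀ a b, Alt (x :: w) a b ↔ Alt w a b := by
  obtain ⟨x, hxD, hmax⟩ := (w.toFinset.filter (fun x => w.count x < k)).exists_max_image
    w.idxOf (by simpa [Finset.Nonempty] using hdef)
  simp only [Finset.mem_filter, mem_toFinset] at hxD hmax
  refine ⟨x, hxD.1, hxD.2, alt_cons_iff hxD.1 fun y hxy hhead => ?_⟩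
  have hy : y ∈ w := hxy.2.2.1
  have hidx := idxOf_lt_idxOf_of_head_filter hxy.1 hy hhead
  have hyk : ¬ w.count y < k := fun hlt => (hmax y ⟨hy, hlt⟩).not_gt hidx
  have := hxy.count_le_of_head hhead
  have := hw y hy
  omega

def deficiency (k : ℕ) (w : List α) : ℕ := ∑ x ∈ w.toFinset, (k - w.count x)

theorem deficiency_cons_lt {k : ℕ} {w : List α} {x : α} (hx : x ∈ w) (hlt : w.count x < k) :
    deficiency k (x :: w) < deficiency k w := by
  unfold deficiency
  rw [toFinset_cons, Finset.insert_eq_of_mem (mem_toFinset.mpr hx)]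
  apply Finset.sum_lt_sum
  · intro y _
    rw [count_cons]
    omega
  · exact ⟨x, mem_toFinset.mpr hx, by rw [count_cons_self]; omega⟩

theorem exists_kUniform_alt_iff_of_count_le {k : ℕ} {w : List α} (hw : ∀ a ∈ w, w.count a ≤ k) :
    ∃ w' : List α, KUniform k w' ∧ w'.toFinset = w.toFinset ∧ ∀ a b, Alt w' a b ↔ Alt w a b := by
  induction hd : deficiency k w using Nat.strong_induction_on generalizing w with
  | _ n ih =>
  by_cases huni : KUniform k w
  · exact ⟨w, huni, rfl, fun _ _ => Iff.rfl⟩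
  have hdef : ∃ x ∈ w, w.count x < k := by
    simp only [KUniform, not_forall] at huni
    obtain ⟨x, hx, hne⟩ := huni
    exact ⟨x, hx, lt_of_le_of_ne (hw x hx) hne⟩
  obtain ⟨x, hx, hlt, halt⟩ := exists_alt_cons_iff_of_count_lt hw hdef
  have hfin : (x :: w).toFinset = w.toFinset := by
    rw [toFinset_cons, Finset.insert_eq_of_mem (mem_toFinset.mpr hx)]
  have hw' : ∀ a ∈ x :: w, (x :: w).count a ≤ k := by
    intro a ha
    by_cases hax : a = x
    · subst hax
      rw [count_cons_self]
      omega
    · rw [count_cons_of_ne (Ne.symm hax)]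
      exact hw a ((mem_cons.mp ha).resolve_left hax)
  obtain ⟨w', huni', hfin', halt'⟩ := ih _ (hd ▸ deficiency_cons_lt hx hlt) hw' rfl
  exact ⟨w', huni', hfin'.trans hfin, fun a b => (halt' a b).trans (halt a b)⟩

theorem stmt1_general {α : Type*} [DecidableEq α] (k : ℕ)
    (V : Finset α) (G : SimpleGraph α) :
    (∃ w : List α, KUniform k w ∧ Represents w V G) ↔
      (∃ w : List α, (∀ a ∈ w, w.count a ≤ k) ∧ Represents w V G) := by
  constructor
  · rintro ⟨w, huni, hrep⟩
    exact ⟨w, fun a ha => (huni a ha).le, hrep⟩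
  · rintro ⟨w, hw, hV, hG⟩
    obtain ⟨w', huni, hfin, halt⟩ := exists_kUniform_alt_iff_of_count_le hw
    exact ⟨w', huni, hfin.trans hV, fun a b => (hG a b).trans (halt a b).symm⟩

/-- A graph is `k`-representable iff it is represented by a word
with at most `k` occurrences of each letter. -/
theorem stmt1 {α : Type*} [DecidableEq α] (k : ℕ) (hk : 1 ≤ k)
    (V : Finset α) (G : SimpleGraph α) :
    (∃ w : List α, KUniform k w ∧ Represents w V G) ↔
      (∃ w : List α, (∀ a ∈ w, w.count a ≤ k) ∧ Represents w V G) :=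
  stmt1_general k V G
end

section
/- For k > 1, the number of graphs on vertex set [n] representable by k-local words is at least the n-th Bell number B_n. -/
/-! A partition of `[n]` with blocks `c₁, …, cₘ` is encoded by the word `c₁c₁c₂c₂⋯cₘcₘ`. Two
letters of one block project to `xyxy`, so they alternate, while letters `a, b` of different
blocks do not, since the projection contains `aa`. Marking the letters block by block, the
marked letters at any time are the earlier blocks together with a prefix of the current block,
which occupy at most two runs of the word: the word is `2`-local. Since the partition is
recovered from its graph, this gives `B_n` distinct graphs. -/

open List

variable {α : Type*} [DecidableEq α]

@[simp] lemma blockCount_nil : blockCount [] = 0 := rfl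

@[simp] lemma blockCount_singleton_true : blockCount [true] = 1 := rfl

@[simp] lemma blockCount_false_cons (l : List Bool) : blockCount (false :: l) = blockCount l := by
  simp [blockCount]

@[simp] lemma blockCount_true_cons_true_cons (l : List Bool) :
    blockCount (true :: true :: l) = blockCount (true :: l) := by
  simp [blockCount]

@[simp] lemma blockCount_true_cons_false_cons (l : List Bool) :
    blockCount (true :: false :: l) = blockCount l + 1 := by
  simp [blockCount]

lemma blockCount_le_blockCount_true_cons (l : List Bool) :
    blockCount l ≤ blockCount (true :: l) := by
  rcases l with _ | ⟨_ | _, l⟩ <;> simp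

@[simp] lemma blockCount_replicate_false_append (n : ℕ) (l : List Bool) :
    blockCount (replicate n false ++ l) = blockCount l := by
  induction n with
  | zero => rfl
  | succ n ih => simpa [replicate_succ] using ih

@[simp] lemma blockCount_true_cons_replicate_true_append (n : ℕ) (l : List Bool) :
    blockCount (true :: (replicate n true ++ l)) = blockCount (true :: l) := by
  induction n with
  | zero => rfl
  | succ n ih => simpa [replicate_succ] using ih

@[simp] lemma blockCount_replicate_false (n : ℕ) : blockCount (replicate n false) = 0 := by
  simpa using blockCount_replicate_false_append n []

lemma blockCount_replicate_true_append_replicate_false (p q : ℕ) :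
    blockCount (replicate p true ++ replicate q false) ≤ 1 := by
  rcases p with _ | p
  · simp
  · rcases q with _ | q
    · simpa [replicate_succ] using (blockCount_true_cons_replicate_true_append p []).le
    · simp [replicate_succ]

/-- The mask of a doubled block `u ++ u` cut at one point, preceded by a marked letter. -/
lemma blockCount_true_cons_doubled_le (p q r : ℕ) :
    blockCount (true :: ((replicate p true ++ replicate q false) ++
      (replicate p true ++ replicate q false) ++ replicate r false)) ≤ 2 := by
  rcases q with _ | q
  · simpa using (blockCount_replicate_true_append_replicate_false 1 r).trans one_le_two
  · simpa [replicate_succ] using blockCount_replicate_true_append_replicate_false p (q + r + 1)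

lemma KLocalWith.mono {k k' : ℕ} {w σ : List α} (h : KLocalWith k w σ) (hk : k ≤ k') :
    KLocalWith k' w σ :=
  ⟨h.1, h.2.1, fun i => (h.2.2 i).trans hk⟩

lemma map_decide_mem_take_of_nodup {c : List α} (hc : c.Nodup) (i : ℕ) :
    c.map (fun x => decide (x ∈ c.take i)) =
      replicate (c.take i).length true ++ replicate (c.drop i).length false := by
  conv_lhs => rw [← take_append_drop i c]
  rw [map_append]
  congr 1
  · exact map_eq_replicate_iff.2 fun x hx => by simpa using hx
  · exact map_eq_replicate_iff.2 fun x hx => by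
      simpa using fun hx' => disjoint_take_drop hc le_rfl hx' hx

def doubleBlocks (L : List (List α)) : List α := (L.map fun c => c ++ c).flatten

omit [DecidableEq α] in
@[simp] lemma doubleBlocks_nil : doubleBlocks ([] : List (List α)) = [] := rfl

omit [DecidableEq α] in
@[simp] lemma doubleBlocks_cons (c : List α) (L : List (List α)) :
    doubleBlocks (c :: L) = c ++ c ++ doubleBlocks L := rfl

omit [DecidableEq α] in
@[simp] lemma doubleBlocks_append (L L' : List (List α)) :
    doubleBlocks (L ++ L') = doubleBlocks L ++ doubleBlocks L' := by
  simp [doubleBlocks]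

omit [DecidableEq α] in
@[simp] lemma mem_doubleBlocks {L : List (List α)} {x : α} :
    x ∈ doubleBlocks L ↔ x ∈ L.flatten := by
  simp [doubleBlocks]

/-- The extra leading `true` is what makes the bound inductive: marking a whole first block
glues it to the virtual marked letter in front. -/
lemma blockCount_true_cons_map_doubleBlocks_le {L : List (List α)} (hL : L.flatten.Nodup)
    (i : ℕ) :
    blockCount (true :: (doubleBlocks L).map (fun x => decide (x ∈ L.flatten.take i))) ≤ 2 := by
  induction L generalizing i with
  | nil => simp
  | cons c L ih =>
    rw [flatten_cons, nodup_append] at hL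
    obtain ⟨hc, hL, hdisj⟩ := hL
    rw [doubleBlocks_cons, flatten_cons, take_append]
    by_cases hi : i ≤ c.length
    · have hrest : (doubleBlocks L).map
          (fun x => decide (x ∈ c.take i ++ L.flatten.take (i - c.length))) =
            replicate (doubleBlocks L).length false := by
        refine map_eq_replicate_iff.2 fun x hx => ?_
        have hxc : x ∉ c := fun hxc => hdisj x hxc x (mem_doubleBlocks.1 hx) rfl
        simpa [Nat.sub_eq_zero_of_le hi] using fun h => hxc (mem_of_mem_take h)
      simp only [Nat.sub_eq_zero_of_le hi, take_zero, append_nil] at hrest ⊢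
      rw [map_append, map_append, map_decide_mem_take_of_nodup hc, hrest]
      exact blockCount_true_cons_doubled_le _ _ _
    · rw [take_of_length_le (by omega)]
      have hcc : (c ++ c).map (fun x => decide (x ∈ c ++ L.flatten.take (i - c.length))) =
          replicate (c ++ c).length true :=
        map_eq_replicate_iff.2 fun x hx => by simpa using Or.inl ((mem_append.1 hx).elim id id)
      have hrest : (doubleBlocks L).map
          (fun x => decide (x ∈ c ++ L.flatten.take (i - c.length))) =
            (doubleBlocks L).map (fun x => decide (x ∈ L.flatten.take (i - c.length))) := by
        refine map_congr_left fun x hx => ?_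
        have hxc : x ∉ c := fun hxc => hdisj x hxc x (mem_doubleBlocks.1 hx) rfl
        simp [hxc]
      rw [map_append, hcc, hrest, blockCount_true_cons_replicate_true_append]
      exact ih hL _

lemma kLocalWith_doubleBlocks {L : List (List α)} (hL : L.flatten.Nodup) :
    KLocalWith 2 (doubleBlocks L) L.flatten := by
  refine ⟨hL, by ext; simp, fun i => ?_⟩
  exact (blockCount_le_blockCount_true_cons _).trans (blockCount_true_cons_map_doubleBlocks_le hL i)

omit [DecidableEq α] in
lemma filter_doubleBlocks_eq_of_mem {L : List (List α)} (hL : L.flatten.Nodup) {c : List α}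
    (hc : c ∈ L) {p : α → Bool} (hp : ∀ x, p x → x ∈ c) :
    (doubleBlocks L).filter p = (c ++ c).filter p := by
  obtain ⟨s, t, rfl⟩ := append_of_mem hc
  rw [flatten_append, flatten_cons, nodup_append, nodup_append] at hL
  obtain ⟨-, ⟨-, -, hct⟩, hsc⟩ := hL
  have hs : (doubleBlocks s).filter p = [] := filter_eq_nil_iff.2 fun x hx hpx =>
    hsc x (mem_doubleBlocks.1 hx) x (mem_append_left _ (hp x hpx)) rfl
  have ht : (doubleBlocks t).filter p = [] := filter_eq_nil_iff.2 fun x hx hpx =>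
    hct x (hp x hpx) x (mem_doubleBlocks.1 hx) rfl
  simp only [doubleBlocks_append, doubleBlocks_cons, filter_append, hs, ht, nil_append, append_nil]

lemma length_filter_eq_pair_eq_two {c : List α} (hc : c.Nodup) {a b : α} (hab : a ≠ b)
    (ha : a ∈ c) (hb : b ∈ c) : (c.filter fun x => decide (x = a ∨ x = b)).length = 2 := by
  have hperm : (c.filter fun x => decide (x = a ∨ x = b)) ~ [a, b] :=
    (perm_ext_iff_of_nodup (hc.filter _) (by simpa using hab)).2 fun x => by
      simp only [mem_filter, decide_eq_true_eq, mem_cons, not_mem_nil, or_false]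
      constructor
      · exact And.right
      · rintro (rfl | rfl) <;> simp_all
  exact hperm.length_eq

lemma filter_eq_pair_eq_singleton {c : List α} (hc : c.Nodup) {a b : α} (ha : a ∈ c)
    (hb : b ∉ c) : (c.filter fun x => decide (x = a ∨ x = b)) = [a] := by
  refine perm_singleton.1 ((perm_ext_iff_of_nodup (hc.filter _) (nodup_singleton a)).2 fun x => ?_)
  simp only [mem_filter, decide_eq_true_eq, mem_singleton]
  constructor
  · rintro ⟨hx, rfl | rfl⟩
    · rfl
    · exact absurd hx hb
  · rintro rfl
    exact ⟨ha, Or.inl rfl⟩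

omit [DecidableEq α] in
lemma isChain_ne_append_self_of_length_eq_two {u : List α} (hu : u.Nodup) (h2 : u.length = 2) :
    (u ++ u).IsChain (· ≠ ·) := by
  obtain ⟨x, y, rfl⟩ := length_eq_two.1 h2
  have hxy : x ≠ y := by simpa using hu
  simp [isChain_cons_cons, hxy, hxy.symm]

lemma alt_doubleBlocks_iff {L : List (List α)} (hL : L.flatten.Nodup) {a b : α} :
    Alt (doubleBlocks L) a b ↔ a ≠ b ∧ ∃ c ∈ L, a ∈ c ∧ b ∈ c := by
  have hblock : ∀ c ∈ L, c.Nodup := (nodup_flatten.1 hL).1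
  constructor
  · rintro ⟨hab, ha, -, hchain⟩
    obtain ⟨c, hc, hac⟩ := mem_flatten.1 (mem_doubleBlocks.1 ha)
    refine ⟨hab, c, hc, hac, by_contra fun hbc => ?_⟩
    have hinfix : [a, a] <:+: (doubleBlocks L).filter fun x => decide (x = a ∨ x = b) := by
      rw [doubleBlocks, filter_flatten, map_map]
      refine infix_of_mem_flatten (mem_map.2 ⟨c, hc, ?_⟩)
      rw [Function.comp_apply, filter_append, filter_eq_pair_eq_singleton (hblock c hc) hac hbc]
      rfl
    simpa using hchain.infix hinfix
  · rintro ⟨hab, c, hc, hac, hbc⟩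
    have hmem : ∀ x ∈ c, x ∈ L.flatten := fun x hx => mem_flatten.2 ⟨c, hc, hx⟩
    refine ⟨hab, mem_doubleBlocks.2 (hmem a hac), mem_doubleBlocks.2 (hmem b hbc), ?_⟩
    rw [filter_doubleBlocks_eq_of_mem hL hc fun x hx => by
      rcases of_decide_eq_true hx with rfl | rfl <;> assumption, filter_append]
    exact isChain_ne_append_self_of_length_eq_two ((hblock c hc).filter _)
      (length_filter_eq_pair_eq_two (hblock c hc) hab hac hbc)

lemma Finpartition.parts_subset_of_part_eq {s : Finset α} {P Q : Finpartition s}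
    (h : ∀ a ∈ s, P.part a = Q.part a) : P.parts ⊆ Q.parts := by
  intro C hC
  obtain ⟨x, hx⟩ := P.nonempty_of_mem_parts hC
  have hxs : x ∈ s := P.le hC hx
  rw [← P.part_eq_of_mem hC hx, h x hxs]
  exact Q.part_mem.2 hxs

lemma Finpartition.ext_of_part_eq {s : Finset α} {P Q : Finpartition s}
    (h : ∀ a ∈ s, P.part a = Q.part a) : P = Q :=
  Finpartition.ext <| Finset.Subset.antisymm (parts_subset_of_part_eq h)
    (parts_subset_of_part_eq fun a ha => (h a ha).symm)

section Partition

variable {n : ℕ} (P : Finpartition (Finset.univ : Finset (Fin n)))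

noncomputable def partBlocks : List (List (Fin n)) := P.parts.toList.map Finset.toList

lemma partWord_eq_doubleBlocks : partWord P = doubleBlocks (partBlocks P) := by
  rw [partWord, doubleBlocks, partBlocks, map_map]
  rfl

lemma nodup_flatten_partBlocks : (partBlocks P).flatten.Nodup := by
  rw [nodup_flatten, partBlocks, pairwise_map]
  refine ⟨by simp [Finset.nodup_toList], P.parts.nodup_toList.imp_of_mem fun hC hD hCD => ?_⟩
  intro x hxC hxD
  exact Finset.disjoint_left.1 (P.disjoint (Finset.mem_toList.1 hC) (Finset.mem_toList.1 hD) hCD)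
    (Finset.mem_toList.1 hxC) (Finset.mem_toList.1 hxD)

lemma mem_flatten_partBlocks (x : Fin n) : x ∈ (partBlocks P).flatten := by
  obtain ⟨C, hC, hx⟩ := P.exists_mem (Finset.mem_univ x)
  simpa [partBlocks] using ⟨C, hC, hx⟩

lemma exists_mem_partBlocks_iff {a b : Fin n} :
    (∃ c ∈ partBlocks P, a ∈ c ∧ b ∈ c) ↔ ∃ C ∈ P.parts, a ∈ C ∧ b ∈ C := by
  simp [partBlocks]

lemma partWord_represents : Represents (partWord P) Finset.univ (partGraph P) := by
  rw [partWord_eq_doubleBlocks]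
  refine ⟨by ext x; simpa using mem_flatten_partBlocks P x, fun a b => ?_⟩
  rw [alt_doubleBlocks_iff (nodup_flatten_partBlocks P), exists_mem_partBlocks_iff]
  rfl

lemma partWord_kLocal {k : ℕ} (hk : 2 ≤ k) : KLocal k (partWord P) := by
  rw [partWord_eq_doubleBlocks]
  exact ⟨_, (kLocalWith_doubleBlocks (nodup_flatten_partBlocks P)).mono hk⟩

lemma mem_part_iff_eq_or_partGraph_adj {x y : Fin n} :
    y ∈ P.part x ↔ y = x ∨ (partGraph P).Adj y x := by
  by_cases hyx : y = x
  · simp [hyx]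
  · simp [hyx, partGraph, P.mem_part_iff_exists]

lemma partGraph_injective : Function.Injective (partGraph (n := n)) := by
  intro P Q h
  refine Finpartition.ext_of_part_eq fun x _ => Finset.ext fun y => ?_
  rw [mem_part_iff_eq_or_partGraph_adj, mem_part_iff_eq_or_partGraph_adj, h]

end Partition

/-- For `k > 1`, the number of graphs on `[n]` representable by `k`-local
words is at least the `n`-th Bell number (the number of partitions of `[n]`). -/
theorem stmt10 (k n : ℕ) (hk : 1 < k) :
    Nat.card (Finpartition (Finset.univ : Finset (Fin n))) ≤
      Nat.card {G : SimpleGraph (Fin n) //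
        ∃ w : List (Fin n), KLocal k w ∧ Represents w Finset.univ G} :=
  Nat.card_le_card_of_injective
    (fun P => ⟨partGraph P, partWord P, partWord_kLocal P hk, partWord_represents P⟩)
    fun _ _ h => partGraph_injective (congrArg Subtype.val h)
end
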